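/- Fix a prime p. For every formal power series g ∈ ℚ[[t]] with constant term 1, ℰ_p(ℒ_p(g)) = g. -/

import Mathlib

open PowerSeries

/-- The function `1_p : ℕ → ℤ`: `1_p(n) = 1` if `p ∤ n`, and `1_p(n) = 1 - p` if `p ∣ n`. -/
def onep (p n : ℕ) : ℤ := if p ∣ n then 1 - (p : ℤ) else 1

/-- The function `μ_p : ℕ → ℤ`: `μ_p(n) = μ(n)` if `p ∤ n`, and
`μ_p(n) = μ(m)·(p^s − p^{s−1})` if `n = m·p^s` with `p ∤ m` and `s ≥ 1`. -/
def mup (p n : ℕ) : ℤ :=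
  if p ∣ n then
    (ArithmeticFunction.moebius (n / p ^ (n.factorization p))) *
      ((p : ℤ) ^ (n.factorization p) - (p : ℤ) ^ (n.factorization p - 1))
  else ArithmeticFunction.moebius n

/-- Substitution of `t^m` for `t` in a formal power series: `(substPow m f) = f(t^m)`. -/
noncomputable def substPow (m : ℕ) (f : PowerSeries ℚ) : PowerSeries ℚ :=
  PowerSeries.mk fun n => if m ∣ n then PowerSeries.coeff (n / m) f else 0

/-- The coefficientwise sum `∑_{m=1}^∞ g m` of a family of power series in which the
`m`-th member has order `≥ m`. -/
noncomputable def seriesSum (g : ℕ → PowerSeries ℚ) : PowerSeries ℚ :=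
  PowerSeries.mk fun n => ∑ m ∈ Finset.Icc 1 n, PowerSeries.coeff n (g m)

/-- Formal exponential `exp(h) = ∑_{k≥0} h^k / k!` of a power series `h` with zero
constant term. -/
noncomputable def expS (h : PowerSeries ℚ) : PowerSeries ℚ :=
  PowerSeries.mk fun n =>
    ∑ k ∈ Finset.range (n + 1), (Nat.factorial k : ℚ)⁻¹ * PowerSeries.coeff n (h ^ k)

/-- Formal logarithm `log(1 + h) = ∑_{k≥1} (−1)^{k+1} h^k / k` for a power series `h`
with zero constant term. -/
noncomputable def logS (h : PowerSeries ℚ) : PowerSeries ℚ :=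
  PowerSeries.mk fun n =>
    ∑ k ∈ Finset.Icc 1 n, ((-1 : ℚ) ^ (k + 1) / k) * PowerSeries.coeff n (h ^ k)

/-- The operator `ℰ_p(f) = exp(∑_{m=1}^∞ (1_p(m)/m)·f(t^m))`. -/
noncomputable def calEp (p : ℕ) (f : PowerSeries ℚ) : PowerSeries ℚ :=
  expS (seriesSum fun m => ((onep p m : ℚ) / m) • substPow m f)

/-- The operator `ℒ_p(g) = ∑_{n=1}^∞ (μ_p(n)/n)·log g(t^n)`. -/
noncomputable def calLp (p : ℕ) (g : PowerSeries ℚ) : PowerSeries ℚ :=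
  seriesSum fun n => ((mup p n : ℚ) / n) • logS (substPow n g - 1)

/-!
Coefficientwise, `∑_{m ≥ 1} a(m) L(t^m)` is the Dirichlet convolution of `a` with the
coefficient sequence of `L`. With `L = log g`, which commutes with `t ↦ t^n`, the exponent in
`ℰ_p(ℒ_p(g))` therefore has coefficient sequence `A * B * L`, where `A(n) = 1_p(n)/n` and
`B(n) = μ_p(n)/n`. Division by `n` is compatible with Dirichlet convolution, and
`1_p * μ_p = 1`: both factors are multiplicative, on powers of a prime `q ≠ p` they agree with
`ζ` and `μ`, and `μ_p(p^j) = φ(p^j)`, so that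
`(1_p * μ_p)(p^(k+1)) = φ(p^(k+1)) + (1 - p) ∑_{j ≤ k} φ(p^j) = 0`.
What remains is `exp(log g) = g`, which follows from `exp(log(1 + X)) = 1 + X`: the quotient
`exp(log(1 + X)) / (1 + X)` has derivative zero because `log(1 + X)' = 1 / (1 + X)`.
-/

namespace PowerSeries

theorem coeff_subst_eq_sum_range {R : Type*} [CommRing R] {h : R⟦X⟧}
    (hh : constantCoeff h = 0) (a : R⟦X⟧) (n : ℕ) :
    coeff n (a.subst h) = ∑ d ∈ Finset.range (n + 1), coeff d a * coeff n (h ^ d) := by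
  rw [coeff_subst' (HasSubst.of_constantCoeff_zero' hh)]
  simp only [smul_eq_mul]
  refine finsum_eq_sum_of_support_subset _ fun d hd => Finset.mem_range_succ_iff.mpr ?_
  by_contra! hnd
  have hX : X ^ d ∣ h ^ d := pow_dvd_pow_of_dvd (X_dvd_iff.mpr hh) d
  exact hd (by simp only [X_pow_dvd_iff.mp hX n hnd, mul_zero])

theorem constantCoeff_subst_of_constantCoeff_zero {R : Type*} [CommRing R] {h : R⟦X⟧}
    (hh : constantCoeff h = 0) (a : R⟦X⟧) : constantCoeff (a.subst h) = constantCoeff a := by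
  simpa using coeff_subst_eq_sum_range hh a 0

theorem exp_subst_log {K : Type*} [Field K] [Algebra ℚ K] : (exp K).subst (log K) = 1 + X := by
  have := algebraRat.charZero K
  have hunit : constantCoeff (1 + X : K⟦X⟧) ≠ 0 := by simp
  have hderiv_log : d⁄dX K (log K) = (1 + X)⁻¹ := by
    rw [PowerSeries.eq_inv_iff_mul_eq_one hunit, deriv_log]
    ext n
    rcases n with _ | n
    · simp
    · simp [mul_add, coeff_succ_mul_X, pow_succ]
  set y := (exp K).subst (log K)
  have hy : d⁄dX K y = y * (1 + X)⁻¹ := by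
    rw [derivative_subst HasSubst.log, derivative_exp, hderiv_log]
  have hconst : y * (1 + X)⁻¹ = 1 := by
    refine derivative.ext ?_ ?_
    · rw [Derivation.leibniz, derivative_inv', hy, map_add, derivative_X, derivative_one]
      simp only [smul_eq_mul]
      ring
    · simp [y, constantCoeff_subst_of_constantCoeff_zero constantCoeff_log]
  calc y = y * (1 + X)⁻¹ * (1 + X) := by
        rw [mul_assoc, PowerSeries.inv_mul_cancel _ hunit, mul_one]
    _ = 1 + X := by rw [hconst, one_mul]

end PowerSeries

namespace ArithmeticFunction

theorem pdiv_id_mul_pdiv_id {K : Type*} [Field K] (f g : ArithmeticFunction K) :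
    pdiv f ↑ArithmeticFunction.id * pdiv g ↑ArithmeticFunction.id =
      pdiv (f * g) ↑ArithmeticFunction.id := by
  ext n
  simp only [mul_apply, pdiv_apply, natCoe_apply, id_apply, Finset.sum_div]
  refine Finset.sum_congr rfl fun x hx => ?_
  rw [← (Nat.mem_divisorsAntidiagonal.mp hx).1, Nat.cast_mul, div_mul_div_comm]

theorem pdiv_one_id {K : Type*} [Field K] :
    pdiv 1 (↑ArithmeticFunction.id : ArithmeticFunction K) = 1 := by
  ext n
  by_cases hn : n = 1 <;> simp [pdiv_apply, hn]

end ArithmeticFunction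

open PowerSeries

theorem substPow_eq_expand {m : ℕ} (hm : m ≠ 0) (f : ℚ⟦X⟧) :
    substPow m f = expand m hm f := by
  ext n
  simp [substPow, coeff_expand]

theorem expS_eq_subst_exp {h : ℚ⟦X⟧} (hh : constantCoeff h = 0) :
    expS h = (exp ℚ).subst h := by
  ext n
  simp [expS, coeff_subst_eq_sum_range hh]

theorem logS_eq_subst_log {h : ℚ⟦X⟧} (hh : constantCoeff h = 0) :
    logS h = (log ℚ).subst h := by
  ext n
  rw [logS, coeff_mk, coeff_subst_eq_sum_range hh]
  refine Finset.sum_subset_zero_on_sdiff (fun k hk => ?_) (fun k hk => ?_) (fun k hk => ?_)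
  · grind
  · obtain rfl : k = 0 := by grind
    simp
  · simp [Nat.one_le_iff_ne_zero.mp (Finset.mem_Icc.mp hk).1]

theorem expS_logOf {g : ℚ⟦X⟧} (hg : constantCoeff g = 1) : expS (logOf g) = g := by
  have hg1 : HasSubst (g - 1) := HasSubst.of_constantCoeff_zero' (by simp [hg])
  rw [expS_eq_subst_exp (constantCoeff_logOf hg), logOf_eq,
    ← subst_comp_subst_apply HasSubst.log hg1, exp_subst_log, ← coe_substAlgHom hg1, map_add,
    map_one, coe_substAlgHom, subst_X hg1, add_sub_cancel]

theorem logS_substPow_sub_one {n : ℕ} (hn : n ≠ 0) {g : ℚ⟦X⟧} (hg : constantCoeff g = 1) :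
    logS (substPow n g - 1) = substPow n (logOf g) := by
  rw [substPow_eq_expand hn, substPow_eq_expand hn, ← map_one (expand n hn), ← map_sub,
    logOf_eq, logS_eq_subst_log (by simp [hg])]
  exact (PowerSeries.expand_subst n hn (HasSubst.of_constantCoeff_zero' (by simp [hg])) _).symm

open ArithmeticFunction

theorem coeff_seriesSum (g : ℕ → ℚ⟦X⟧) (n : ℕ) :
    coeff n (seriesSum g) = ∑ m ∈ Finset.Icc 1 n, coeff n (g m) :=
  coeff_mk _ _

theorem constantCoeff_seriesSum (g : ℕ → ℚ⟦X⟧) : constantCoeff (seriesSum g) = 0 := by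
  rw [← coeff_zero_eq_constantCoeff_apply, coeff_seriesSum, Finset.Icc_eq_empty_of_lt one_pos,
    Finset.sum_empty]

theorem seriesSum_congr {g h : ℕ → ℚ⟦X⟧} (hgh : ∀ m, m ≠ 0 → g m = h m) :
    seriesSum g = seriesSum h := by
  ext n
  simp only [coeff_seriesSum]
  exact Finset.sum_congr rfl fun m hm => by
    rw [hgh m (Nat.one_le_iff_ne_zero.mp (Finset.mem_Icc.mp hm).1)]

noncomputable def coeffArith (L : ℚ⟦X⟧) : ArithmeticFunction ℚ :=
  ⟨fun n => if n = 0 then 0 else coeff n L, if_pos rfl⟩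

theorem coeffArith_apply {n : ℕ} (hn : n ≠ 0) (L : ℚ⟦X⟧) : coeffArith L n = coeff n L :=
  if_neg hn

theorem eq_of_coeffArith_eq {L M : ℚ⟦X⟧} (h0 : constantCoeff L = constantCoeff M)
    (h : coeffArith L = coeffArith M) : L = M := by
  ext n
  rcases eq_or_ne n 0 with rfl | hn
  · simpa using h0
  · rw [← coeffArith_apply hn, ← coeffArith_apply hn, h]

theorem coeffArith_seriesSum_smul_substPow (a : ArithmeticFunction ℚ) (L : ℚ⟦X⟧) :
    coeffArith (seriesSum fun m => a m • substPow m L) = a * coeffArith L := by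
  ext n
  rcases eq_or_ne n 0 with rfl | hn
  · simp [coeffArith]
  rw [coeffArith_apply hn, coeff_seriesSum, mul_apply,
    Nat.sum_divisorsAntidiagonal (fun x y => a x * coeffArith L y)]
  symm
  refine Finset.sum_subset_zero_on_sdiff (fun m hm => ?_) (fun m hm => ?_) (fun m hm => ?_)
  · exact Finset.mem_Icc.mpr ⟨Nat.pos_of_mem_divisors hm, Nat.divisor_le hm⟩
  · have hmn : ¬m ∣ n := fun hmn =>
      (Finset.mem_sdiff.mp hm).2 (Nat.mem_divisors.mpr ⟨hmn, hn⟩)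
    simp [substPow, hmn]
  · have hnm : n / m ≠ 0 := (Nat.div_pos (Nat.divisor_le hm) (Nat.pos_of_mem_divisors hm)).ne'
    simp [substPow, coeffArith_apply hnm, Nat.dvd_of_mem_divisors hm]

theorem seriesSum_smul_substPow_seriesSum (a b : ArithmeticFunction ℚ) (L : ℚ⟦X⟧) :
    (seriesSum fun m => a m • substPow m (seriesSum fun n => b n • substPow n L)) =
      seriesSum fun n => (a * b) n • substPow n L :=
  eq_of_coeffArith_eq (by simp only [constantCoeff_seriesSum]) <| by
    simp only [coeffArith_seriesSum_smul_substPow, mul_assoc]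

theorem seriesSum_one_smul_substPow {L : ℚ⟦X⟧} (hL : constantCoeff L = 0) :
    (seriesSum fun n => (1 : ArithmeticFunction ℚ) n • substPow n L) = L :=
  eq_of_coeffArith_eq (by rw [constantCoeff_seriesSum, hL]) <| by
    rw [coeffArith_seriesSum_smul_substPow, one_mul]

open scoped ArithmeticFunction.Moebius ArithmeticFunction.zeta Nat

section Arithmetic

variable {p : ℕ}

theorem onep_mul_of_coprime (hp : p.Prime) {m n : ℕ} (h : m.Coprime n) :
    onep p (m * n) = onep p m * onep p n := by
  have : ¬(p ∣ m ∧ p ∣ n) := fun ⟨hm, hn⟩ =>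
    hp.ne_one (Nat.eq_one_of_dvd_coprimes h hm hn)
  simp only [onep, hp.dvd_mul]
  split_ifs <;> simp_all

theorem mup_zero (p : ℕ) : mup p 0 = 0 := by
  simp [mup]

theorem mup_eq_moebius_mul_totient (hp : p.Prime) (n : ℕ) :
    mup p n = μ (ordCompl[p] n) * (φ (ordProj[p] n) : ℤ) := by
  unfold mup
  split_ifs with hpn
  · rcases eq_or_ne n 0 with rfl | hn
    · simp
    obtain ⟨s, hs⟩ := Nat.exists_eq_add_of_lt (hp.factorization_pos_of_dvd hn hpn)
    rw [hs, zero_add, Nat.totient_prime_pow_succ hp]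
    push_cast [hp.one_le]
    ring
  · simp [Nat.factorization_eq_zero_of_not_dvd hpn]

theorem sum_totient_prime_pow (hp : p.Prime) (k : ℕ) :
    ∑ j ∈ Finset.range (k + 1), φ (p ^ j) = p ^ k := by
  rw [← Nat.sum_divisors_prime_pow hp, Nat.sum_totient]

variable (p) in
def onepArith : ArithmeticFunction ℤ := ⟨fun n => if n = 0 then 0 else onep p n, if_pos rfl⟩

variable (p) in
def mupArith : ArithmeticFunction ℤ := ⟨mup p, mup_zero p⟩

theorem onepArith_apply {n : ℕ} (hn : n ≠ 0) : onepArith p n = onep p n := if_neg hn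

theorem mupArith_apply (n : ℕ) : mupArith p n = mup p n := rfl

theorem isMultiplicative_onepArith (hp : p.Prime) : (onepArith p).IsMultiplicative := by
  refine ⟨by simp [onepArith_apply, onep, hp.ne_one], fun {m n} h => ?_⟩
  rcases eq_or_ne m 0 with rfl | hm
  · simp
  rcases eq_or_ne n 0 with rfl | hn
  · simp
  rw [onepArith_apply hm, onepArith_apply hn, onepArith_apply (mul_ne_zero hm hn),
    onep_mul_of_coprime hp h]

theorem isMultiplicative_mupArith (hp : p.Prime) : (mupArith p).IsMultiplicative := by
  refine ⟨by simp [mupArith_apply, mup, hp.ne_one], fun {m n} h => ?_⟩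
  rcases eq_or_ne m 0 with rfl | hm
  · simp
  rcases eq_or_ne n 0 with rfl | hn
  · simp
  simp only [mupArith_apply, mup_eq_moebius_mul_totient hp]
  rw [Nat.ordCompl_mul, Nat.ordProj_mul p hm hn, isMultiplicative_moebius.map_mul_of_coprime
      (Nat.Coprime.of_dvd (Nat.ordCompl_dvd m p) (Nat.ordCompl_dvd n p) h),
    Nat.totient_mul (Nat.Coprime.of_dvd (Nat.ordProj_dvd m p) (Nat.ordProj_dvd n p) h)]
  push_cast
  ring

theorem onepArith_mul_mupArith_apply_prime_pow_of_ne (hp : p.Prime) {q : ℕ} (hq : q.Prime)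
    (hqp : q ≠ p) (i : ℕ) :
    (onepArith p * mupArith p) (q ^ i) = (1 : ArithmeticFunction ℤ) (q ^ i) := by
  have hndvd : ∀ d, d ∣ q ^ i → ¬p ∣ d := fun d hd hpd =>
    hqp ((Nat.prime_dvd_prime_iff_eq hp hq).mp (hp.dvd_of_dvd_pow (hpd.trans hd))).symm
  rw [← coe_zeta_mul_moebius, mul_apply, mul_apply]
  refine Finset.sum_congr rfl fun x hx => ?_
  have hx1 : x.1 ∣ q ^ i := Nat.fst_mem_divisors_of_mem_antidiagonal hx |> Nat.dvd_of_mem_divisors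
  have hx2 : x.2 ∣ q ^ i := Nat.snd_mem_divisors_of_mem_antidiagonal hx |> Nat.dvd_of_mem_divisors
  have hx10 : x.1 ≠ 0 := ne_zero_of_dvd_ne_zero (pow_ne_zero i hq.ne_zero) hx1
  rw [onepArith_apply hx10, mupArith_apply, onep, if_neg (hndvd _ hx1), mup,
    if_neg (hndvd _ hx2), natCoe_apply, zeta_apply_ne hx10]
  simp

theorem onepArith_mul_mupArith_apply_prime_pow (hp : p.Prime) (i : ℕ) :
    (onepArith p * mupArith p) (p ^ i) = (1 : ArithmeticFunction ℤ) (p ^ i) := by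
  rcases i with _ | k
  · simp [onepArith_apply, mupArith_apply, onep, mup, hp.ne_one]
  have hmup : ∀ j, mupArith p (p ^ j) = φ (p ^ j) := fun j => by
    simp [mupArith_apply, mup_eq_moebius_mul_totient hp, hp.factorization_self,
      Nat.div_self (pow_pos hp.pos j)]
  have honep : ∀ j ∈ Finset.range (k + 1), onepArith p (p ^ (k + 1) / p ^ j) = 1 - p := by
    intro j hj
    have hj : j < k + 1 := Finset.mem_range.mp hj
    rw [Nat.pow_div hj.le hp.pos, onepArith_apply (pow_ne_zero _ hp.ne_zero), onep,
      if_pos (dvd_pow_self p (Nat.sub_ne_zero_of_lt hj))]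
  rw [one_apply_ne (Nat.one_lt_pow k.succ_ne_zero hp.one_lt).ne', mul_apply,
    Nat.sum_divisorsAntidiagonal' (fun x y => onepArith p x * mupArith p y),
    Nat.sum_divisors_prime_pow hp, Finset.sum_range_succ, Finset.sum_congr rfl fun j hj => by
      rw [honep j hj, hmup], ← Finset.mul_sum, Nat.div_self (pow_pos hp.pos _), hmup,
    ← Nat.cast_sum, sum_totient_prime_pow hp, Nat.totient_prime_pow_succ hp]
  simp [onepArith_apply, onep, hp.ne_one]
  push_cast [hp.one_le]
  ring

theorem onepArith_mul_mupArith (hp : p.Prime) : onepArith p * mupArith p = 1 := by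
  refine (IsMultiplicative.eq_iff_eq_on_prime_powers _
    ((isMultiplicative_onepArith hp).mul (isMultiplicative_mupArith hp)) _ isMultiplicative_one).mpr
    fun q i hq => ?_
  rcases eq_or_ne q p with rfl | hqp
  · exact onepArith_mul_mupArith_apply_prime_pow hp i
  · exact onepArith_mul_mupArith_apply_prime_pow_of_ne hp hq hqp i

theorem pdiv_onepArith_apply (p n : ℕ) :
    pdiv (↑(onepArith p) : ArithmeticFunction ℚ) ↑ArithmeticFunction.id n =
      (onep p n : ℚ) / n := by
  rcases eq_or_ne n 0 with rfl | hn
  · simp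
  · simp [pdiv_apply, onepArith_apply hn]

theorem pdiv_mupArith_apply (p n : ℕ) :
    pdiv (↑(mupArith p) : ArithmeticFunction ℚ) ↑ArithmeticFunction.id n =
      (mup p n : ℚ) / n := by
  simp [pdiv_apply, mupArith_apply]

end Arithmetic

/-- Fix a prime `p`. For every formal power series `g ∈ ℚ[[t]]` with constant term `1`,
`ℰ_p(ℒ_p(g)) = g`. -/
theorem calEp_calLp (p : ℕ) (hp : p.Prime) (g : PowerSeries ℚ)
    (hg : PowerSeries.constantCoeff g = 1) : calEp p (calLp p g) = g := by
  set A : ArithmeticFunction ℚ := pdiv (↑(onepArith p)) ↑ArithmeticFunction.id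
  set B : ArithmeticFunction ℚ := pdiv (↑(mupArith p)) ↑ArithmeticFunction.id
  have hAB : A * B = 1 := by
    rw [pdiv_id_mul_pdiv_id, ← intCoe_mul, onepArith_mul_mupArith hp, intCoe_one, pdiv_one_id]
  have hL : calLp p g = seriesSum fun n => B n • substPow n (logOf g) :=
    seriesSum_congr fun n hn => by rw [pdiv_mupArith_apply, logS_substPow_sub_one hn hg]
  calc calEp p (calLp p g)
      = expS (seriesSum fun m => A m • substPow m (calLp p g)) := by
        simp only [calEp, A, pdiv_onepArith_apply]
    _ = g := by
        rw [hL, seriesSum_smul_substPow_seriesSum, hAB,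
          seriesSum_one_smul_substPow (constantCoeff_logOf hg), expS_logOf hg]
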